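/- In any LC-NSB evacuation run on an initial loopless multigraph G(0) on n ≥ 2 vertices, for every frame index k′ ≥ 0: if the maximum degree at the beginning of the frame satisfies Δ(3k′) ≥ 2, then the maximum degree decreases by at least two by the end of the frame, i.e., Δ(3k′ + 3) ≤ Δ(3k′) − 2. -/

import Mathlib

open scoped Classical

namespace NSBPaper

variable {V : Type} [Fintype V] [DecidableEq V]

/-- Degree of a vertex in a loopless multigraph given by multiplicity function `w`. -/
def deg (w : V → V → ℕ) (v : V) : ℕ := ∑ u, w v u

/-- Maximum degree of the multigraph. -/
def maxDeg (w : V → V → ℕ) : ℕ := Finset.univ.sup fun v => deg w v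

/-- The support simple graph of a multigraph: `u` and `v` are adjacent iff `u ≠ v`
and there is at least one multi-edge between them. -/
def support (w : V → V → ℕ) : SimpleGraph V where
  Adj u v := u ≠ v ∧ 1 ≤ w u v ∧ 1 ≤ w v u
  symm := ⟨fun u v h => ⟨h.1.symm, h.2.2, h.2.1⟩⟩
  loopless := ⟨fun v h => h.1 rfl⟩

/-- A set of unordered pairs `M` saturates a vertex `v` if some pair of `M` contains `v`. -/
def Saturates (M : Finset (Sym2 V)) (v : V) : Prop := ∃ e ∈ M, v ∈ e

/-- `M` is a matching of the multigraph `w`: its elements are non-loop edges of the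
support, and no two distinct elements share a vertex. -/
def IsMatching (w : V → V → ℕ) (M : Finset (Sym2 V)) : Prop :=
  (∀ e ∈ M, ¬ e.IsDiag) ∧
  (∀ u v : V, s(u, v) ∈ M → 1 ≤ w u v) ∧
  (∀ e ∈ M, ∀ f ∈ M, e ≠ f → ∀ x : V, x ∈ e → x ∉ f)

/-- `M` is a maximal matching of `w`: no pair can be added keeping it a matching. -/
def IsMaximalMatching (w : V → V → ℕ) (M : Finset (Sym2 V)) : Prop :=
  IsMatching w M ∧ ∀ e : Sym2 V, e ∉ M → ¬ IsMatching w (insert e M)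

/-- Removing a matching `M` from the multigraph `w`: the multiplicity of each pair in `M`
decreases by one. -/
def removeMatching (w : V → V → ℕ) (M : Finset (Sym2 V)) : V → V → ℕ :=
  fun u v => if s(u, v) ∈ M then w u v - 1 else w u v

/-- The subgraph of `G` induced by `Z` is bipartite: there is a set `A` such that every
edge of `G` inside `Z` joins `A` to its complement. -/
def BipartiteOn (G : SimpleGraph V) (Z : Set V) : Prop :=
  ∃ A : Set V, ∀ ⦃u v : V⦄, u ∈ Z → v ∈ Z → G.Adj u v → (u ∈ A ↔ v ∉ A)

/-- The edge multiset of `w` can be partitioned into `T` matchings. -/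
def CanEvacuate (w : V → V → ℕ) (T : ℕ) : Prop :=
  ∃ M : Fin T → Finset (Sym2 V),
    (∀ j, IsMatching w (M j)) ∧
    ∀ u v : V, (Finset.univ.filter fun j => s(u, v) ∈ M j).card = w u v

/-- The vertex-weight of a matching: the sum of the weights of its saturated vertices. -/
noncomputable def matchWeight (φ : V → ℕ) (M : Finset (Sym2 V)) : ℕ :=
  ∑ v : V, if Saturates M v then φ v else 0

/-- `Rfun M k i = 1` iff vertex `i` is saturated by the matching chosen in slot `k`. -/
noncomputable def Rfun (M : ℕ → Finset (Sym2 V)) (k : ℕ) (i : V) : ℕ :=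
  if Saturates (M k) i then 1 else 0

/-- `Ufun M k i` is `R i (k-1) * R i (k-2)` if `k ≡ 2 [MOD 3]` and `R i (k-1)` otherwise,
with `R i k = 0` for `k < 0`. -/
noncomputable def Ufun (M : ℕ → Finset (Sym2 V)) (k : ℕ) (i : V) : ℕ :=
  if k = 0 then 0
  else if k % 3 = 2 then Rfun M (k - 1) i * Rfun M (k - 2) i
  else Rfun M (k - 1) i

/-- Vertex `i` is heavy in `w`: `n * d(i) ≥ (n - 1) * Δ`. -/
def Heavy (w : V → V → ℕ) (i : V) : Prop :=
  (Fintype.card V - 1) * maxDeg w ≤ Fintype.card V * deg w i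

/-- Vertex `i` is critical in `w`: its degree is the maximum degree. -/
def Critical (w : V → V → ℕ) (i : V) : Prop := deg w i = maxDeg w

/-- The NSB weight of vertex `i`, where `u i` records whether `i` received enough
service previously. -/
noncomputable def nsbWeight (w : V → V → ℕ) (u : V → ℕ) (i : V) : ℕ :=
  if Heavy w i then deg w i * (2 - u i) else deg w i

/-- The LC-NSB weight of vertex `i`. -/
noncomputable def lcnsbWeight (w : V → V → ℕ) (u : V → ℕ) (i : V) : ℕ :=
  if Critical w i then 5 - 2 * u i
  else if Heavy w i then 4 - 2 * u i
  else 1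

/-- An NSB evacuation run on the initial multigraph `w0`: in each slot `k`, a matching
`M k` of `G k` maximizing the total NSB weight of saturated vertices is removed. -/
structure NSBRun (w0 : V → V → ℕ) where
  G : ℕ → V → V → ℕ
  M : ℕ → Finset (Sym2 V)
  init : G 0 = w0
  step : ∀ k, G (k + 1) = removeMatching (G k) (M k)
  matching : ∀ k, IsMatching (G k) (M k)
  opt : ∀ k, ∀ M' : Finset (Sym2 V), IsMatching (G k) M' →
    matchWeight (nsbWeight (G k) (Ufun M k)) M' ≤ matchWeight (nsbWeight (G k) (Ufun M k)) (M k)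

/-- An LC-NSB evacuation run on the initial multigraph `w0`. -/
structure LCNSBRun (w0 : V → V → ℕ) where
  G : ℕ → V → V → ℕ
  M : ℕ → Finset (Sym2 V)
  init : G 0 = w0
  step : ∀ k, G (k + 1) = removeMatching (G k) (M k)
  matching : ∀ k, IsMatching (G k) (M k)
  opt : ∀ k, ∀ M' : Finset (Sym2 V), IsMatching (G k) M' →
    matchWeight (lcnsbWeight (G k) (Ufun M k)) M' ≤
      matchWeight (lcnsbWeight (G k) (Ufun M k)) (M k)

end NSBPaper

namespace NSBPaper

/-!
Two facts drive the argument. First, a maximum-weight matching covers every vertex of weight at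
least `c > 0` as soon as these vertices have maximum degree and induce a bipartite graph: double
counting gives Hall's condition, so they have distinct neighbours; the bipartition turns this
choice into a matching covering them; and exchanging along an alternating path from a vertex the
optimal matching misses would produce a heavier matching. Second, all LC-NSB weights are
positive, so two vertices exposed in the same slot are never adjacent afterwards.

In a frame starting at maximum degree `Δ`, a vertex exposed in slot `3k′` while critical is still
critical, with weight 5, in slot `3k′ + 1`, and these vertices are pairwise non-adjacent; so after
two slots every degree is below `Δ`. A vertex still at degree `Δ - 1` before slot `3k′ + 2` was
exposed in one of the two earlier slots, so it is critical with weight 5 there, and saturation in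
slot `3k′` 2-colours these vertices. Hence it is served and ends the frame at degree `≤ Δ - 2`.
-/

open Finset

section Matching

variable {V : Type} {w : V → V → ℕ} {M : Finset (Sym2 V)}

theorem saturates_iff_exists_mk_mem {v : V} : Saturates M v ↔ ∃ u, s(v, u) ∈ M := by
  constructor
  · rintro ⟨e, he, hv⟩
    obtain ⟨u, rfl⟩ := Sym2.mem_iff_exists.1 hv
    exact ⟨u, he⟩
  · rintro ⟨u, hu⟩
    exact ⟨_, hu, Sym2.mem_mk_left v u⟩

theorem IsMatching.eq_of_mem (hM : IsMatching w M) {e f : Sym2 V} (he : e ∈ M) (hf : f ∈ M)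
    {v : V} (hve : v ∈ e) (hvf : v ∈ f) : e = f :=
  by_contra fun hne => hM.2.2 e he f hf hne v hve hvf

theorem IsMatching.eq_of_mk_mem (hM : IsMatching w M) {v u u' : V} (hu : s(v, u) ∈ M)
    (hu' : s(v, u') ∈ M) : u = u' :=
  Sym2.congr_right.1 (hM.eq_of_mem hu hu' (Sym2.mem_mk_left _ _) (Sym2.mem_mk_left _ _))

theorem IsMatching.adj_of_mem (hM : IsMatching w M) {u v : V} (h : s(u, v) ∈ M) :
    (support w).Adj u v :=
  ⟨fun huv => hM.1 _ h (Sym2.mk_isDiag_iff.2 huv), hM.2.1 u v h,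
    hM.2.1 v u (Sym2.eq_swap ▸ h)⟩

theorem IsMatching.subset (hM : IsMatching w M) {N : Finset (Sym2 V)} (h : N ⊆ M) :
    IsMatching w N :=
  ⟨fun e he => hM.1 e (h he), fun u v huv => hM.2.1 u v (h huv),
    fun e he f hf => hM.2.2 e (h he) f (h hf)⟩

variable [DecidableEq V]

theorem saturates_insert {e : Sym2 V} {v : V} :
    Saturates (insert e M) v ↔ v ∈ e ∨ Saturates M v := by
  simp only [Saturates, mem_insert, exists_eq_or_imp]

theorem IsMatching.not_saturates_erase (hM : IsMatching w M) {e : Sym2 V} (he : e ∈ M) {v : V}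
    (hv : v ∈ e) : ¬ Saturates (M.erase e) v := by
  rintro ⟨f, hf, hvf⟩
  exact (ne_of_mem_erase hf) (hM.eq_of_mem (mem_of_mem_erase hf) he hvf hv)

theorem IsMatching.insert_of_not_saturates (hM : IsMatching w M) {x y : V}
    (hxy : (support w).Adj x y) (hx : ¬ Saturates M x) (hy : ¬ Saturates M y) :
    IsMatching w (insert s(x, y) M) := by
  have hfresh : ∀ f ∈ M, ∀ z ∈ s(x, y), z ∉ f := by
    intro f hf z hz hzf
    rcases Sym2.mem_iff.1 hz with rfl | rfl
    exacts [hx ⟨f, hf, hzf⟩, hy ⟨f, hf, hzf⟩]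
  refine ⟨?_, ?_, ?_⟩
  · intro e he
    rcases mem_insert.1 he with rfl | he
    exacts [Sym2.mk_isDiag_iff.not.2 hxy.1, hM.1 e he]
  · intro u v huv
    rcases mem_insert.1 huv with h | h
    · rcases Sym2.eq_iff.1 h with ⟨rfl, rfl⟩ | ⟨rfl, rfl⟩
      exacts [hxy.2.1, hxy.2.2]
    · exact hM.2.1 u v h
  · intro e he f hf hef z hze hzf
    rcases mem_insert.1 he with rfl | he <;> rcases mem_insert.1 hf with rfl | hf
    exacts [hef rfl, hfresh f hf z hze hzf, hfresh e he z hzf hze, hM.2.2 e he f hf hef z hze hzf]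

theorem isMatching_image {T : Finset V} {g : V → V} (hadj : ∀ t ∈ T, (support w).Adj t (g t))
    (hdisj : ∀ a ∈ T, ∀ b ∈ T, ∀ x, x ∈ s(a, g a) → x ∈ s(b, g b) → a = b) :
    IsMatching w (T.image fun t => s(t, g t)) := by
  refine ⟨?_, ?_, ?_⟩
  · intro e he
    obtain ⟨t, ht, rfl⟩ := mem_image.1 he
    exact Sym2.mk_isDiag_iff.not.2 (hadj t ht).1
  · intro u v huv
    obtain ⟨t, ht, he⟩ := mem_image.1 huv
    rcases Sym2.eq_iff.1 he with ⟨rfl, rfl⟩ | ⟨rfl, rfl⟩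
    exacts [(hadj _ ht).2.1, (hadj _ ht).2.2]
  · rintro _ he _ hf hne x hxe hxf
    obtain ⟨a, ha, rfl⟩ := mem_image.1 he
    obtain ⟨b, hb, rfl⟩ := mem_image.1 hf
    exact hne (by rw [hdisj a ha b hb x hxe hxf])

/-- Take the `F`-edges leaving one side of the bipartition. -/
theorem exists_isMatching_saturates_of_image_eq (F : V → V) (S : Finset V)
    (hinj : Set.InjOn F S) (hperm : S.image F = S) (hadj : ∀ s ∈ S, (support w).Adj s (F s))
    (hbip : BipartiteOn (support w) S) :
    ∃ M, IsMatching w M ∧ (∀ s ∈ S, Saturates M s) ∧ ∀ v, Saturates M v → v ∈ S := by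
  have hFS : ∀ s ∈ S, F s ∈ S := fun s hs => hperm ▸ mem_image_of_mem F hs
  obtain ⟨A, hA⟩ := hbip
  have hflip : ∀ s ∈ S, (s ∈ A ↔ F s ∉ A) := fun s hs =>
    hA (mem_coe.2 hs) (mem_coe.2 (hFS s hs)) (hadj s hs)
  set T := S.filter (· ∈ A)
  refine ⟨T.image fun t => s(t, F t), isMatching_image (fun t ht => hadj t (mem_filter.1 ht).1)
    fun a ha b hb x hxa hxb => ?_, fun s hs => ?_, fun v hv => ?_⟩
  · obtain ⟨ha, haA⟩ := mem_filter.1 ha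
    obtain ⟨hb, hbA⟩ := mem_filter.1 hb
    rcases Sym2.mem_iff.1 hxa with rfl | rfl <;> rcases Sym2.mem_iff.1 hxb with h | h
    exacts [h, absurd (h ▸ haA) ((hflip b hb).1 hbA), absurd (h ▸ hbA) ((hflip a ha).1 haA),
      hinj ha hb h]
  · by_cases hsA : s ∈ A
    · exact ⟨_, mem_image_of_mem _ (mem_filter.2 ⟨hs, hsA⟩), Sym2.mem_mk_left _ _⟩
    · obtain ⟨t, ht, rfl⟩ := mem_image.1 (hperm.symm ▸ hs)
      have htA : t ∈ A := by simpa [hsA] using (hflip t ht).2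
      exact ⟨_, mem_image_of_mem _ (mem_filter.2 ⟨ht, htA⟩), Sym2.mem_mk_right _ _⟩
  · obtain ⟨_, he, hve⟩ := hv
    obtain ⟨t, ht, rfl⟩ := mem_image.1 he
    rcases Sym2.mem_iff.1 hve with rfl | rfl
    exacts [(mem_filter.1 ht).1, hFS t (mem_filter.1 ht).1]

/-- A vertex `s ∈ S` outside `F '' S` can be matched to `F s` and both removed; once there is no
such vertex, `F` permutes `S`. -/
theorem exists_isMatching_saturates_of_injOn (F : V → V) (S : Finset V)
    (hinj : Set.InjOn F S) (hadj : ∀ s ∈ S, (support w).Adj s (F s))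
    (hbip : BipartiteOn (support w) S) :
    ∃ M, IsMatching w M ∧ (∀ s ∈ S, Saturates M s) ∧
      ∀ v, Saturates M v → v ∈ S ∨ v ∈ S.image F := by
  induction S using Finset.strongInduction with
  | _ S ih =>
  by_cases hhead : ∃ s ∈ S, s ∉ S.image F
  swap
  · push Not at hhead
    obtain ⟨M, hM, hsat, hvert⟩ := exists_isMatching_saturates_of_image_eq F S hinj
      (eq_of_subset_of_card_le hhead (card_image_of_injOn hinj).le).symm hadj hbip
    exact ⟨M, hM, hsat, fun v hv => Or.inl (hvert v hv)⟩
  obtain ⟨s, hs, hsF⟩ := hhead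
  set S' := (S.erase s).erase (F s)
  have hS' : S' ⊆ S := (erase_subset _ _).trans (erase_subset _ _)
  have hsS' : s ∉ S' := fun h => (ne_of_mem_erase (mem_of_mem_erase h)) rfl
  obtain ⟨M', hM', hsat', hvert'⟩ := ih S'
    ((ssubset_iff_of_subset hS').2 ⟨s, hs, hsS'⟩) (hinj.mono (by simpa using hS'))
    (fun t ht => hadj t (hS' ht))
    (let ⟨A, hA⟩ := hbip; ⟨A, fun u v hu hv => hA (hS' hu) (hS' hv)⟩)
  have hs' : ¬ Saturates M' s := fun h => by
    rcases hvert' s h with h | h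
    exacts [hsS' h, hsF (image_subset_image hS' h)]
  have hFs' : ¬ Saturates M' (F s) := fun h => by
    rcases hvert' _ h with h | h
    · exact ne_of_mem_erase h rfl
    · obtain ⟨t, ht, hts⟩ := mem_image.1 h
      exact hsS' (hinj (hS' ht) hs hts ▸ ht)
  refine ⟨insert s(s, F s) M', hM'.insert_of_not_saturates (hadj s hs) hs' hFs',
    fun t ht => ?_, fun v hv => ?_⟩
  · rw [saturates_insert, Sym2.mem_iff]
    by_cases hts : t = s
    · exact Or.inl (Or.inl hts)
    by_cases htF : t = F s
    · exact Or.inl (Or.inr htF)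
    exact Or.inr (hsat' t (mem_erase.2 ⟨htF, mem_erase.2 ⟨hts, ht⟩⟩))
  · rcases saturates_insert.1 hv with hv | hv
    · rcases Sym2.mem_iff.1 hv with rfl | rfl
      exacts [Or.inl hs, Or.inr (mem_image_of_mem F hs)]
    · exact (hvert' v hv).imp (fun h => hS' h) fun h => image_subset_image hS' h

variable [Fintype V]

theorem matchWeight_insert (φ : V → ℕ) {x y : V} (hxy : x ≠ y) (hx : ¬ Saturates M x)
    (hy : ¬ Saturates M y) :
    matchWeight φ (insert s(x, y) M) = matchWeight φ M + φ x + φ y := by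
  have hsplit : ∀ v, (if Saturates (insert s(x, y) M) v then φ v else 0) =
      (if Saturates M v then φ v else 0) + (if v = x then φ v else 0) +
        (if v = y then φ v else 0) := by
    intro v
    rw [saturates_insert, Sym2.mem_iff]
    by_cases hvx : v = x <;> by_cases hvy : v = y <;> simp_all
  simp only [matchWeight, hsplit, sum_add_distrib, sum_ite_eq', mem_univ, if_true]

theorem IsMatching.matchWeight_erase (hM : IsMatching w M) (φ : V → ℕ) {y z : V}
    (hyz : s(y, z) ∈ M) : matchWeight φ M = matchWeight φ (M.erase s(y, z)) + φ y + φ z := by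
  conv_lhs => rw [← insert_erase hyz]
  exact matchWeight_insert φ (hM.adj_of_mem hyz).1
    (hM.not_saturates_erase hyz (Sym2.mem_mk_left _ _))
    (hM.not_saturates_erase hyz (Sym2.mem_mk_right _ _))

theorem IsMatching.swap (hM : IsMatching w M) (φ : V → ℕ) {x y z : V} (hyz : s(y, z) ∈ M)
    (hxy : (support w).Adj x y) (hx : ¬ Saturates M x) :
    IsMatching w (insert s(x, y) (M.erase s(y, z))) ∧
      ¬ Saturates (insert s(x, y) (M.erase s(y, z))) z ∧
      matchWeight φ (insert s(x, y) (M.erase s(y, z))) + φ z = matchWeight φ M + φ x := by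
  have hxz : x ≠ z := by rintro rfl; exact hx ⟨_, hyz, Sym2.mem_mk_right _ _⟩
  have hyE := hM.not_saturates_erase hyz (Sym2.mem_mk_left _ _)
  have hzE := hM.not_saturates_erase hyz (Sym2.mem_mk_right _ _)
  have hxE : ¬ Saturates (M.erase s(y, z)) x := fun ⟨f, hf, hxf⟩ =>
    hx ⟨f, mem_of_mem_erase hf, hxf⟩
  refine ⟨(hM.subset (erase_subset _ _)).insert_of_not_saturates hxy hxE hyE, ?_, ?_⟩
  · rw [saturates_insert, Sym2.mem_iff]
    rintro ((rfl | rfl) | h)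
    exacts [hxz rfl, (hM.adj_of_mem hyz).1 rfl, hzE h]
  · rw [matchWeight_insert φ hxy.1 hxE hyE, hM.matchWeight_erase φ hyz]
    ring

def IsMaxWeightMatching (φ : V → ℕ) (w : V → V → ℕ) (M : Finset (Sym2 V)) : Prop :=
  IsMatching w M ∧ ∀ M', IsMatching w M' → matchWeight φ M' ≤ matchWeight φ M

variable {φ : V → ℕ}

theorem IsMaxWeightMatching.saturates_or_saturates (hM : IsMaxWeightMatching φ w M) {x y : V}
    (hpos : 0 < φ x) (hxy : (support w).Adj x y) : Saturates M x ∨ Saturates M y := by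
  by_contra! h
  have := hM.2 _ (hM.1.insert_of_not_saturates hxy h.1 h.2)
  rw [matchWeight_insert φ hxy.1 h.1 h.2] at this
  omega

/-- The augmenting-path argument: follow the alternating path of `Mstar` and `M'` from `x`. Each
swap keeps the deficit below `c`, so the vertex it exposes again has weight `≥ c`, hence is covered
by `Mstar`, while `Mstar \ M'` shrinks. -/
theorem IsMaxWeightMatching.matchWeight_add_lt (hM : IsMaxWeightMatching φ w M) {c : ℕ}
    (hc : 0 < c) {Mstar : Finset (Sym2 V)} (hMstar : IsMatching w Mstar)
    (hsat : ∀ v, c ≤ φ v → Saturates Mstar v) {M' : Finset (Sym2 V)} (hM' : IsMatching w M')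
    {x : V} (hxM' : ¬ Saturates M' x) (hx : Saturates Mstar x) :
    matchWeight φ M' + φ x < matchWeight φ M + c := by
  induction hn : #(Mstar \ M') using Nat.strong_induction_on generalizing M' x with
  | _ n ih =>
  by_contra! hge
  obtain ⟨y, hxy⟩ := saturates_iff_exists_mk_mem.1 hx
  have hadj := hMstar.adj_of_mem hxy
  by_cases hy : Saturates M' y
  · obtain ⟨z, hyz⟩ := saturates_iff_exists_mk_mem.1 hy
    obtain ⟨hM'', hzM'', hweight⟩ := hM'.swap φ hyz hadj hxM'
    have hz : c ≤ φ z := by have := hM.2 _ hM''; omega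
    have hyzMstar : s(y, z) ∉ Mstar := by
      intro h
      rw [hMstar.eq_of_mk_mem h (Sym2.eq_swap ▸ hxy)] at hyz
      exact hxM' ⟨_, hyz, Sym2.mem_mk_right _ _⟩
    have hshrink : Mstar \ insert s(x, y) (M'.erase s(y, z)) ⊂ Mstar \ M' := by
      refine (ssubset_iff_of_subset ?_).2 ⟨s(x, y), ?_, by simp⟩
      · intro e
        simp only [mem_sdiff, mem_insert, mem_erase, not_or, not_and_or]
        rintro ⟨he, -, hne | heM'⟩
        · exact absurd he (by rwa [not_not.1 hne])
        · exact ⟨he, heM'⟩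
      · exact mem_sdiff.2 ⟨hxy, fun h => hxM' ⟨_, h, Sym2.mem_mk_left _ _⟩⟩
    have := ih _ (hn ▸ card_lt_card hshrink) hM'' hzM'' (hsat z hz) rfl
    omega
  · have := hM.2 _ (hM'.insert_of_not_saturates hadj hxM' hy)
    rw [matchWeight_insert φ hadj.1 hxM' hy] at this
    omega

theorem IsMaxWeightMatching.saturates_of_le (hM : IsMaxWeightMatching φ w M) {c : ℕ}
    (hc : 0 < c) {Mstar : Finset (Sym2 V)} (hMstar : IsMatching w Mstar)
    (hsat : ∀ v, c ≤ φ v → Saturates Mstar v) {v : V} (hv : c ≤ φ v) : Saturates M v := by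
  by_contra hvM
  have := hM.matchWeight_add_lt hc hMstar hsat hM.1 hvM (hsat v hv)
  omega

end Matching

section Degrees

variable {V : Type} [Fintype V] {w : V → V → ℕ}

theorem deg_le_maxDeg (w : V → V → ℕ) (v : V) : deg w v ≤ maxDeg w :=
  le_sup (mem_univ v)

theorem maxDeg_le {d : ℕ} (h : ∀ v, deg w v ≤ d) : maxDeg w ≤ d :=
  Finset.sup_le fun v _ => h v

variable [DecidableEq V] {M : Finset (Sym2 V)} {v : V}

theorem deg_removeMatching_of_not_saturates (hv : ¬ Saturates M v) :
    deg (removeMatching w M) v = deg w v :=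
  sum_congr rfl fun u _ => if_neg fun h => hv ⟨_, h, Sym2.mem_mk_left v u⟩

theorem IsMatching.deg_removeMatching_add_one (hM : IsMatching w M) (hv : Saturates M v) :
    deg (removeMatching w M) v + 1 = deg w v := by
  obtain ⟨u₀, hu₀⟩ := saturates_iff_exists_mk_mem.1 hv
  have hpoint : ∀ u, removeMatching w M v u + (if u = u₀ then 1 else 0) = w v u := by
    intro u
    by_cases hu : u = u₀
    · subst hu
      have := hM.2.1 v u hu₀
      simp only [removeMatching, if_pos hu₀, if_true]
      omega
    · simp only [removeMatching, if_neg hu, add_zero]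
      exact if_neg fun h => hu (hM.eq_of_mk_mem h hu₀)
  simp only [deg, ← hpoint, sum_add_distrib, sum_ite_eq', mem_univ, if_true]

/-- Hall's condition, by double counting the edges at `A`. -/
theorem card_le_card_biUnion_of_critical (hsymm : ∀ u v, w u v = w v u) (hΔ : 0 < maxDeg w)
    {A : Finset V} (hA : ∀ a ∈ A, Critical w a) :
    #A ≤ #(A.biUnion fun a => univ.filter fun u => 1 ≤ w a u) := by
  set B := A.biUnion fun a => univ.filter fun u => 1 ≤ w a u
  refine Nat.le_of_mul_le_mul_left ?_ hΔ
  calc maxDeg w * #A = ∑ a ∈ A, ∑ u ∈ B, w a u := by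
        rw [mul_comm, ← smul_eq_mul, ← sum_const]
        refine sum_congr rfl fun a ha => ?_
        rw [← hA a ha, deg]
        refine (sum_subset (subset_univ B) fun u _ hu => ?_).symm
        by_contra h
        exact hu (mem_biUnion.2 ⟨a, ha, mem_filter.2 ⟨mem_univ u, Nat.one_le_iff_ne_zero.2 h⟩⟩)
    _ = ∑ u ∈ B, ∑ a ∈ A, w u a := by
        rw [sum_comm]
        exact sum_congr rfl fun u _ => sum_congr rfl fun a _ => hsymm a u
    _ ≤ ∑ u ∈ B, deg w u := sum_le_sum fun u _ => sum_le_sum_of_subset (subset_univ A)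
    _ ≤ ∑ _u ∈ B, maxDeg w := sum_le_sum fun u _ => deg_le_maxDeg w u
    _ = maxDeg w * #B := by rw [sum_const, smul_eq_mul, mul_comm]

theorem exists_injOn_adj_of_critical (hsymm : ∀ u v, w u v = w v u) (hloop : ∀ v, w v v = 0)
    (hΔ : 0 < maxDeg w) (S : Finset V) (hS : ∀ s ∈ S, Critical w s) :
    ∃ F : V → V, Set.InjOn F S ∧ ∀ s ∈ S, (support w).Adj s (F s) := by
  have hall (A : Finset S) :
      #A ≤ #(A.biUnion fun s => univ.filter fun u => 1 ≤ w s.1 u) := by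
    have := card_le_card_biUnion_of_critical hsymm hΔ (A := A.image Subtype.val) fun a ha => by
      obtain ⟨s, -, rfl⟩ := mem_image.1 ha
      exact hS s s.2
    rwa [image_biUnion, card_image_of_injective A Subtype.val_injective] at this
  obtain ⟨f, hf, hfadj⟩ := (all_card_le_biUnion_card_iff_exists_injective _).1 hall
  refine ⟨fun v => if h : v ∈ S then f ⟨v, h⟩ else v, ?_, fun s hs => ?_⟩
  · intro a ha b hb hab
    rw [mem_coe] at ha hb
    simp only [dif_pos ha, dif_pos hb] at hab
    exact congrArg Subtype.val (hf hab)
  · have h1 : 1 ≤ w s (f ⟨s, hs⟩) := (mem_filter.1 (hfadj ⟨s, hs⟩)).2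
    simp only [dif_pos hs]
    refine ⟨fun h => ?_, h1, hsymm s _ ▸ h1⟩
    rw [← h, hloop] at h1
    omega

theorem IsMaxWeightMatching.saturates_of_critical (hsymm : ∀ u v, w u v = w v u)
    (hloop : ∀ v, w v v = 0) (hΔ : 0 < maxDeg w) {φ : V → ℕ}
    (hM : IsMaxWeightMatching φ w M) {c : ℕ} (hc : 0 < c) (hcrit : ∀ v, c ≤ φ v → Critical w v)
    (hbip : BipartiteOn (support w) {v | c ≤ φ v}) (hv : c ≤ φ v) : Saturates M v := by
  set S := univ.filter fun v => c ≤ φ v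
  have hS : ∀ {v}, v ∈ S ↔ c ≤ φ v := by simp [S]
  obtain ⟨F, hinj, hadj⟩ :=
    exists_injOn_adj_of_critical hsymm hloop hΔ S fun s hs => hcrit s (hS.1 hs)
  obtain ⟨Mstar, hMstar, hsat, -⟩ := exists_isMatching_saturates_of_injOn F S hinj hadj
    (by convert hbip using 2; ext; exact hS)
  exact hM.saturates_of_le hc hMstar (fun u hu => hsat u (hS.2 hu)) hv

end Degrees

section Service

variable {V : Type} {M : ℕ → Finset (Sym2 V)} {k : ℕ} {i : V}

theorem Ufun_le_one (M : ℕ → Finset (Sym2 V)) (k : ℕ) (i : V) : Ufun M k i ≤ 1 := by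
  unfold Ufun Rfun
  split_ifs <;> simp

theorem Ufun_three_mul_add_one_eq_zero :
    Ufun M (3 * k + 1) i = 0 ↔ ¬ Saturates (M (3 * k)) i := by
  simp [Ufun, Rfun]

theorem Ufun_three_mul_add_two_eq_zero :
    Ufun M (3 * k + 2) i = 0 ↔ ¬ Saturates (M (3 * k + 1)) i ∨ ¬ Saturates (M (3 * k)) i := by
  simp [Ufun, Rfun, show (3 * k + 2) % 3 = 2 by omega]
  tauto

end Service

section Weight

variable {V : Type} [Fintype V] {w : V → V → ℕ} {u : V → ℕ} {i : V}

theorem five_le_lcnsbWeight_iff : 5 ≤ lcnsbWeight w u i ↔ Critical w i ∧ u i = 0 := by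
  unfold lcnsbWeight
  split_ifs with hcrit hheavy <;> simp only [hcrit, true_and, false_and, iff_false] <;> omega

theorem lcnsbWeight_pos (hu : u i ≤ 1) : 0 < lcnsbWeight w u i := by
  unfold lcnsbWeight
  split_ifs <;> omega

end Weight

namespace LCNSBRun

variable {V : Type} [Fintype V] [DecidableEq V] {w0 : V → V → ℕ} (run : LCNSBRun w0)

theorem symm (hsymm : ∀ u v, w0 u v = w0 v u) (k : ℕ) (u v : V) :
    run.G k u v = run.G k v u := by
  induction k generalizing u v with
  | zero => rw [run.init]; exact hsymm u v
  | succ k ih => simp only [run.step, removeMatching, ih u v, Sym2.eq_swap]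

theorem loopless (hloop : ∀ v, w0 v v = 0) (k : ℕ) (v : V) : run.G k v v = 0 := by
  induction k with
  | zero => rw [run.init]; exact hloop v
  | succ k ih => simp only [run.step, removeMatching, ih]; split_ifs <;> rfl

theorem adj_of_le {j k : ℕ} (hjk : j ≤ k) {a b : V} (h : (support (run.G k)).Adj a b) :
    (support (run.G j)).Adj a b := by
  have hanti (u v : V) : Antitone fun k => run.G k u v := antitone_nat_of_succ_le fun k => by
    simp only [run.step, removeMatching]; split_ifs <;> omega
  exact ⟨h.1, h.2.1.trans (hanti a b hjk), h.2.2.trans (hanti b a hjk)⟩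

theorem deg_succ_add_one {k : ℕ} {v : V} (hv : Saturates (run.M k) v) :
    deg (run.G (k + 1)) v + 1 = deg (run.G k) v := by
  rw [run.step]; exact (run.matching k).deg_removeMatching_add_one hv

theorem deg_succ {k : ℕ} {v : V} (hv : ¬ Saturates (run.M k) v) :
    deg (run.G (k + 1)) v = deg (run.G k) v := by
  rw [run.step]; exact deg_removeMatching_of_not_saturates hv

theorem deg_succ_le (k : ℕ) (v : V) : deg (run.G (k + 1)) v ≤ deg (run.G k) v := by
  by_cases hv : Saturates (run.M k) v
  · have := run.deg_succ_add_one hv; omega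
  · exact (run.deg_succ hv).le

theorem isMaxWeightMatching (k : ℕ) :
    IsMaxWeightMatching (lcnsbWeight (run.G k) (Ufun run.M k)) (run.G k) (run.M k) :=
  ⟨run.matching k, run.opt k⟩

theorem saturates_or_saturates {j k : ℕ} (hjk : j ≤ k) {a b : V}
    (h : (support (run.G k)).Adj a b) : Saturates (run.M j) a ∨ Saturates (run.M j) b :=
  (run.isMaxWeightMatching j).saturates_or_saturates (lcnsbWeight_pos (Ufun_le_one _ _ _))
    (run.adj_of_le hjk h)

theorem saturates_of_critical (hsymm : ∀ u v, w0 u v = w0 v u) (hloop : ∀ v, w0 v v = 0)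
    (k : ℕ) (hΔ : 0 < maxDeg (run.G k))
    (hbip : BipartiteOn (support (run.G k)) {v | Critical (run.G k) v ∧ Ufun run.M k v = 0})
    {v : V} (hv : Critical (run.G k) v) (hu : Ufun run.M k v = 0) : Saturates (run.M k) v :=
  (run.isMaxWeightMatching k).saturates_of_critical (run.symm hsymm k) (run.loopless hloop k) hΔ
    (by norm_num) (fun _ hv => (five_le_lcnsbWeight_iff.1 hv).1)
    (by simpa only [five_le_lcnsbWeight_iff] using hbip) (five_le_lcnsbWeight_iff.2 ⟨hv, hu⟩)

theorem deg_lt_of_frame (hsymm : ∀ u v, w0 u v = w0 v u) (hloop : ∀ v, w0 v v = 0) (k : ℕ)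
    (hΔ : 0 < maxDeg (run.G (3 * k))) (v : V) :
    deg (run.G (3 * k + 2)) v < maxDeg (run.G (3 * k)) := by
  have hd0 := deg_le_maxDeg (run.G (3 * k)) v
  have hd1 : deg (run.G (3 * k + 2)) v ≤ deg (run.G (3 * k + 1)) v := run.deg_succ_le _ v
  by_cases h0 : Saturates (run.M (3 * k)) v
  · have := run.deg_succ_add_one h0; omega
  have hmax : maxDeg (run.G (3 * k + 1)) ≤ maxDeg (run.G (3 * k)) :=
    maxDeg_le fun u => (run.deg_succ_le _ u).trans (deg_le_maxDeg _ u)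
  by_contra! hge
  have hd01 := run.deg_succ h0
  have hcrit : Critical (run.G (3 * k + 1)) v := le_antisymm (deg_le_maxDeg _ v) (by omega)
  have h1 : Saturates (run.M (3 * k + 1)) v := by
    refine run.saturates_of_critical hsymm hloop _ (by rw [← hcrit]; omega)
      ⟨∅, fun a b ha hb hab => ?_⟩ hcrit (Ufun_three_mul_add_one_eq_zero.2 h0)
    rcases run.saturates_or_saturates (Nat.le_succ _) hab with h | h
    exacts [absurd h (Ufun_three_mul_add_one_eq_zero.1 ha.2),
      absurd h (Ufun_three_mul_add_one_eq_zero.1 hb.2)]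
  have : deg (run.G (3 * k + 2)) v + 1 = deg (run.G (3 * k + 1)) v := run.deg_succ_add_one h1
  omega

theorem deg_add_two_le_of_frame (hsymm : ∀ u v, w0 u v = w0 v u) (hloop : ∀ v, w0 v v = 0)
    (k : ℕ) (hΔ : 2 ≤ maxDeg (run.G (3 * k))) (v : V) :
    deg (run.G (3 * k + 3)) v + 2 ≤ maxDeg (run.G (3 * k)) := by
  have hlt := run.deg_lt_of_frame hsymm hloop k (by omega)
  have hd2 := hlt v
  by_cases h2 : Saturates (run.M (3 * k + 2)) v
  · have : deg (run.G (3 * k + 3)) v + 1 = _ := run.deg_succ_add_one h2; omega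
  by_contra! hgt
  have hd3 : deg (run.G (3 * k + 3)) v = _ := run.deg_succ h2
  have hcrit : Critical (run.G (3 * k + 2)) v :=
    le_antisymm (deg_le_maxDeg _ v) (maxDeg_le fun u => by have := hlt u; omega)
  have hfresh : ¬ Saturates (run.M (3 * k + 1)) v ∨ ¬ Saturates (run.M (3 * k)) v := by
    by_contra! h
    have : deg (run.G (3 * k + 2)) v + 1 = _ := run.deg_succ_add_one h.1
    have := run.deg_succ_add_one h.2
    have := deg_le_maxDeg (run.G (3 * k)) v
    omega
  refine h2 (run.saturates_of_critical hsymm hloop _ (by rw [← hcrit]; omega)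
    ⟨{u | Saturates (run.M (3 * k)) u}, fun a b ha hb hab => ?_⟩ hcrit
    (Ufun_three_mul_add_two_eq_zero.2 hfresh))
  have ha := Ufun_three_mul_add_two_eq_zero.1 ha.2
  have hb := Ufun_three_mul_add_two_eq_zero.1 hb.2
  have h0 := run.saturates_or_saturates (j := 3 * k) (by omega) hab
  have h1 := run.saturates_or_saturates (j := 3 * k + 1) (by omega) hab
  change Saturates _ a ↔ ¬ Saturates _ b
  tauto

end LCNSBRun

theorem lcnsb_frame_decrease_general {V : Type} [Fintype V] [DecidableEq V]
    (w0 : V → V → ℕ) (hsymm : ∀ u v, w0 u v = w0 v u) (hloop : ∀ v, w0 v v = 0)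
    (run : LCNSBRun w0) (k' : ℕ)
    (h : 2 ≤ maxDeg (run.G (3 * k'))) :
    maxDeg (run.G (3 * k' + 3)) ≤ maxDeg (run.G (3 * k')) - 2 :=
  maxDeg_le fun v => by have := run.deg_add_two_le_of_frame hsymm hloop k' h v; omega

/-- In any LC-NSB evacuation run, if `Δ(3k′) ≥ 2` then
`Δ(3k′ + 3) ≤ Δ(3k′) − 2`. -/
theorem lcnsb_frame_decrease {V : Type} [Fintype V] [DecidableEq V]
    (w0 : V → V → ℕ) (hsymm : ∀ u v, w0 u v = w0 v u) (hloop : ∀ v, w0 v v = 0)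
    (hn : 2 ≤ Fintype.card V)
    (run : LCNSBRun w0) (k' : ℕ)
    (h : 2 ≤ maxDeg (run.G (3 * k'))) :
    maxDeg (run.G (3 * k' + 3)) ≤ maxDeg (run.G (3 * k')) - 2 :=
  lcnsb_frame_decrease_general w0 hsymm hloop run k' h

end NSBPaper
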